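/- Let P be a shift-invariant probability measure on A^ℤ such that for every n-cylinder and all t > 0, P{T_{a₁ⁿ}·P([a₁ⁿ]) ≤ t} ≤ Ce^{−cn} + ρ₂ t for constants C, c, ρ₂ > 0. Then for every α₂ > 1, eventually (P×P)-almost surely, log(W⁺ₙ(ω,ω′) · P([ω₁ⁿ])) > −α₂ log n, where W⁺ₙ(ω,ω′) = T_{ω₁ⁿ}(ω′). -/

import Mathlib

open MeasureTheory Filter Finset

def shift {A : Type*} (ω : ℤ → A) : ℤ → A := fun k => ω (k + 1)

def cylinder {A : Type*} {n : ℕ} (x : Fin n → A) : Set (ℤ → A) :=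
  {ω | ∀ i : Fin n, ω i = x i}

def blockOf {A : Type*} (n : ℕ) (ω : ℤ → A) : Fin n → A := fun i => ω i

noncomputable def hitTime {A : Type*} {n : ℕ} (x : Fin n → A) (ω : ℤ → A) : ℕ :=
  sInf {k : ℕ | 1 ≤ k ∧ shift^[k] ω ∈ cylinder x}

noncomputable def waitTime {A : Type*} (n : ℕ) (ω ω' : ℤ → A) : ℕ :=
  hitTime (blockOf n ω) ω'

/-! The event `{W⁺ₙ · P([ω₁ⁿ]) ≤ n^{-α₂}}` is the union over the `n`-blocks `a` of
`[a] × {T_a · P([a]) ≤ n^{-α₂}}`; the cylinders partition the space, so its `P × P`-measure is at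
most `C e^{-cn} + ρ₂ n^{-α₂}`, which is summable, and Borel–Cantelli concludes.
The partition needs measurable singletons in `A`. If some `{x}` is not measurable, `x` shares its
measurable atom with some `y ≠ x`; replacing `x` by `y` everywhere moves every sequence into
`{T_{xⁿ} = 0}` without leaving any measurable set, so that event has outer measure one,
contradicting the tail bound. -/

section Symbolic

variable {A : Type*}

theorem shift_iterate_apply (k : ℕ) (ω : ℤ → A) (j : ℤ) : (shift^[k] ω) j = ω (j + k) := by
  induction k generalizing ω with
  | zero => simp
  | succ k ih =>
    rw [Function.iterate_succ_apply, ih, shift]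
    push_cast
    ring_nf

theorem hitTime_eq_zero_of_forall_ne {n : ℕ} {a : Fin n → A} {ω : ℤ → A} (i : Fin n)
    (h : ∀ j, ω j ≠ a i) : hitTime a ω = 0 :=
  Nat.sInf_eq_zero.2 <| Or.inr <| Set.eq_empty_of_forall_notMem fun k hk =>
    h _ <| by simpa only [shift_iterate_apply] using hk.2 i

theorem mem_cylinder_blockOf (n : ℕ) (ω : ℤ → A) : ω ∈ cylinder (blockOf n ω) :=
  fun _ => rfl

theorem pairwise_disjoint_cylinder (n : ℕ) :
    Pairwise (Function.onFun Disjoint (cylinder : (Fin n → A) → Set (ℤ → A))) :=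
  fun _ _ hab => Set.disjoint_left.2 fun _ ha hb => hab (funext fun i => (ha i).symm.trans (hb i))

theorem iUnion_cylinder (n : ℕ) : ⋃ a : Fin n → A, cylinder a = Set.univ :=
  Set.iUnion_eq_univ_iff.2 fun ω => ⟨blockOf n ω, mem_cylinder_blockOf n ω⟩

end Symbolic

section Measurable

variable {A : Type*} [MeasurableSpace A]

theorem measurableSet_cylinder [MeasurableSingletonClass A] {n : ℕ} (a : Fin n → A) :
    MeasurableSet (cylinder a) := by
  simp only [_root_.cylinder, Set.ofPred_forall]
  exact MeasurableSet.iInter fun i => measurable_pi_apply _ (measurableSet_singleton _)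

theorem tsum_measure_cylinder [MeasurableSingletonClass A] [Finite A] (μ : Measure (ℤ → A))
    [IsProbabilityMeasure μ] (n : ℕ) : ∑' a : Fin n → A, μ (cylinder a) = 1 := by
  rw [← measure_iUnion (pairwise_disjoint_cylinder n) measurableSet_cylinder, iUnion_cylinder,
    measure_univ]

theorem prod_setOf_mem_blockOf_le [MeasurableSingletonClass A] [Finite A]
    (μ ν : Measure (ℤ → A)) [IsProbabilityMeasure μ] [SFinite ν] (n : ℕ)
    (S : (Fin n → A) → Set (ℤ → A)) {δ : ENNReal} (h : ∀ a : Fin n → A, ν (S a) ≤ δ) :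
    μ.prod ν {p | p.2 ∈ S (blockOf n p.1)} ≤ δ :=
  calc μ.prod ν {p | p.2 ∈ S (blockOf n p.1)}
      ≤ μ.prod ν (⋃ a, _root_.cylinder a ×ˢ S a) :=
        measure_mono fun p hp => Set.mem_iUnion.2 ⟨_, mem_cylinder_blockOf n p.1, hp⟩
    _ ≤ ∑' a, μ (_root_.cylinder a) * ν (S a) := by
        simpa only [Measure.prod_prod] using
          measure_iUnion_le (μ := μ.prod ν) fun a : Fin n → A => _root_.cylinder a ×ˢ S a
    _ ≤ ∑' a, μ (_root_.cylinder a) * δ := ENNReal.tsum_le_tsum fun a => by gcongr; exact h a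
    _ = δ := by rw [ENNReal.tsum_mul_right, tsum_measure_cylinder, one_mul]

theorem exists_ne_mem_measurableAtom [Countable A] {x : A} (hx : ¬MeasurableSet {x}) :
    ∃ y ∈ measurableAtom x, y ≠ x := by
  by_contra! h
  exact hx <| (Set.eq_singleton_iff_unique_mem.2 ⟨mem_measurableAtom_self x, h⟩) ▸
    MeasurableSet.measurableAtom_of_countable x

theorem preimage_comp_eq_of_mem_measurableAtom {ι : Type*} {g : A → A}
    (hg : ∀ z, g z ∈ measurableAtom z) {B : Set (ι → A)} (hB : MeasurableSet B) :
    (fun ω => g ∘ ω) ⁻¹' B = B := by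
  have hgE : ∀ E, MeasurableSet E → g ⁻¹' E = E := fun E hE => Set.ext fun z =>
    ⟨fun hgz => by_contra fun hz => mem_of_mem_measurableAtom (hg z) hE.compl hz hgz,
      fun hz => mem_of_mem_measurableAtom (hg z) hE hz⟩
  have hle : MeasurableSpace.pi ≤ MeasurableSpace.invariants fun ω : ι → A => g ∘ ω :=
    iSup_le fun i => MeasurableSpace.comap_le_iff_le_map.2 fun E hE =>
      ⟨measurable_pi_apply i hE, by ext ω; simp [← Set.mem_preimage (f := g), hgE E hE]⟩
  exact (hle B hB).2

end Measurable

theorem measure_eq_measure_univ_of_range_subset {α : Type*} [MeasurableSpace α] (μ : Measure α)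
    {Φ : α → α} (hΦ : ∀ B, MeasurableSet B → Φ ⁻¹' B = B) {S : Set α}
    (hS : Set.range Φ ⊆ S) : μ S = μ Set.univ := by
  have huniv : toMeasurable μ S = Set.univ := Set.eq_univ_of_forall fun ω => by
    rw [← hΦ _ (measurableSet_toMeasurable μ S)]
    exact subset_toMeasurable μ S (hS ⟨ω, rfl⟩)
  rw [← measure_toMeasurable, huniv]

theorem measure_hitTime_const_eq_zero {A : Type*} [MeasurableSpace A] [Countable A] {x : A}
    (hx : ¬MeasurableSet {x}) (P : Measure (ℤ → A)) {n : ℕ} (hn : 0 < n) :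
    P {ω | hitTime (fun _ : Fin n => x) ω = 0} = P Set.univ := by
  classical
  obtain ⟨y, hy, hyx⟩ := exists_ne_mem_measurableAtom hx
  let g : A → A := Function.update id x y
  have hg : ∀ z, g z ∈ measurableAtom z := fun z => by
    by_cases hz : z = x
    · simp [g, hz, hy]
    · simp [g, hz]
  refine measure_eq_measure_univ_of_range_subset P
    (fun B hB => preimage_comp_eq_of_mem_measurableAtom hg hB) ?_
  rintro _ ⟨ω, rfl⟩
  refine hitTime_eq_zero_of_forall_ne ⟨0, hn⟩ fun j hj => ?_
  by_cases hωj : ω j = x <;> simp_all [g]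

theorem measurableSingletonClass_of_tail_bound {A : Type*} [MeasurableSpace A] [Countable A]
    (P : Measure (ℤ → A)) [IsProbabilityMeasure P] {t ε : ℕ → ℝ} (ht : ∀ n, 0 ≤ t n)
    (hε : Tendsto ε atTop (nhds 0))
    (h : ∀ᶠ n in atTop, ∀ a : Fin n → A,
      P {ω | (hitTime a ω : ℝ) * (P (cylinder a)).toReal ≤ t n} ≤ ENNReal.ofReal (ε n)) :
    MeasurableSingletonClass A := by
  refine ⟨fun x => by_contra fun hx => ?_⟩
  obtain ⟨n, hn, hεn, hPn⟩ :=
    ((eventually_gt_atTop 0).and ((hε.eventually (gt_mem_nhds one_pos)).and h)).exists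
  have hle : P {ω | hitTime (fun _ : Fin n => x) ω = 0} ≤ ENNReal.ofReal (ε n) :=
    (measure_mono fun ω (hω : hitTime _ ω = 0) => by simp [Set.mem_ofPred_eq, hω, ht n]).trans
      (hPn fun _ => x)
  rw [measure_hitTime_const_eq_zero hx P hn, measure_univ] at hle
  exact (hle.trans_lt (ENNReal.ofReal_lt_one.2 hεn)).false

theorem ae_eventually_notMem_of_eventually_le {α : Type*} [MeasurableSpace α] {μ : Measure α}
    [IsFiniteMeasure μ] {s : ℕ → Set α} {ε : ℕ → ℝ} (hε : Summable ε)
    (hs : ∀ᶠ n in atTop, μ (s n) ≤ ENNReal.ofReal (ε n)) :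
    ∀ᵐ x ∂μ, ∀ᶠ n in atTop, x ∉ s n := by
  obtain ⟨N, hN⟩ := eventually_atTop.1 hs
  have htail : ∀ᵐ x ∂μ, ∀ᶠ n in atTop, x ∉ s (n + N) := ae_eventually_notMem <|
    ne_top_of_le_ne_top (hε.comp_injective (add_left_injective N)).tsum_ofReal_ne_top
      (ENNReal.tsum_le_tsum fun n => hN _ (Nat.le_add_left N n))
  filter_upwards [htail] with x hx
  filter_upwards [(tendsto_sub_atTop_nat N).eventually hx, eventually_ge_atTop N] with n hn hNn
  rwa [Nat.sub_add_cancel hNn] at hn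

theorem summable_mul_exp_add_mul_rpow {C c ρ α : ℝ} (hc : 0 < c) (hα : 1 < α) :
    Summable fun n : ℕ => C * Real.exp (-c * n) + ρ * (n : ℝ) ^ (-α) := by
  refine (Summable.mul_left C ?_).add ((Real.summable_nat_rpow.2 (neg_lt_neg hα)).mul_left ρ)
  simpa only [mul_comm] using Real.summable_exp_nat_mul_iff.2 (neg_lt_zero.2 hc)

theorem waiting_time_log_lower_bound_general
    {A : Type*} [Fintype A] [MeasurableSpace A]
    (P : Measure (ℤ → A)) [IsProbabilityMeasure P]
    (C c ρ₂ : ℝ) (hc : 0 < c)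
    (hTail : ∀ (n : ℕ) (a : Fin n → A), ∀ t : ℝ, 0 < t →
      (P {ω | (hitTime a ω : ℝ) * (P (cylinder a)).toReal ≤ t}).toReal ≤
        C * Real.exp (-c * n) + ρ₂ * t)
    (α₂ : ℝ) (hα₂ : 1 < α₂) :
    ∀ᵐ p ∂(P.prod P), ∀ᶠ n : ℕ in atTop,
      Real.log ((waitTime n p.1 p.2 : ℝ) * (P (cylinder (blockOf n p.1))).toReal) >
        -α₂ * Real.log n := by
  have hε := summable_mul_exp_add_mul_rpow (C := C) (ρ := ρ₂) hc hα₂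
  have hbound : ∀ᶠ n : ℕ in atTop, ∀ a : Fin n → A,
      P {ω | (hitTime a ω : ℝ) * (P (cylinder a)).toReal ≤ (n : ℝ) ^ (-α₂)} ≤
        ENNReal.ofReal (C * Real.exp (-c * n) + ρ₂ * (n : ℝ) ^ (-α₂)) := by
    filter_upwards [eventually_gt_atTop 0] with n hn a
    exact (ENNReal.ofReal_toReal (measure_ne_top _ _)).symm.trans_le
      (ENNReal.ofReal_le_ofReal (hTail n a _ (by positivity)))
  have : MeasurableSingletonClass A := measurableSingletonClass_of_tail_bound P
    (fun n => Real.rpow_nonneg n.cast_nonneg _) hε.tendsto_atTop_zero hbound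
  filter_upwards [ae_eventually_notMem_of_eventually_le hε
    (hbound.mono fun n hn => prod_setOf_mem_blockOf_le P P n _ hn)] with p hp
  filter_upwards [hp, eventually_gt_atTop 0] with n hpn hn
  have hn' : (0 : ℝ) < n := Nat.cast_pos.2 hn
  calc -α₂ * Real.log n = Real.log ((n : ℝ) ^ (-α₂)) := (Real.log_rpow hn' _).symm
    _ < _ := Real.log_lt_log (by positivity) (not_le.1 hpn)

/-- under the lower-tail bound `P{T_{a₁ⁿ}·P([a₁ⁿ]) ≤ t} ≤ Ce^{−cn} + ρ₂ t`,
for every `α₂ > 1`, eventually `P×P`-almost surely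
`log (W⁺ₙ(ω,ω')·P([ω₁ⁿ])) > −α₂ log n`. -/
theorem waiting_time_log_lower_bound
    {A : Type*} [Fintype A] [MeasurableSpace A]
    (P : Measure (ℤ → A)) [IsProbabilityMeasure P]
    (hinv : MeasurePreserving shift P P)
    (C c ρ₂ : ℝ) (hC : 0 < C) (hc : 0 < c) (hρ₂ : 0 < ρ₂)
    (hTail : ∀ (n : ℕ) (a : Fin n → A), ∀ t : ℝ, 0 < t →
      (P {ω | (hitTime a ω : ℝ) * (P (cylinder a)).toReal ≤ t}).toReal ≤
        C * Real.exp (-c * n) + ρ₂ * t)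
    (α₂ : ℝ) (hα₂ : 1 < α₂) :
    ∀ᵐ p ∂(P.prod P), ∀ᶠ n : ℕ in atTop,
      Real.log ((waitTime n p.1 p.2 : ℝ) * (P (cylinder (blockOf n p.1))).toReal) >
        -α₂ * Real.log n :=
  waiting_time_log_lower_bound_general P C c ρ₂ hc hTail α₂ hα₂
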